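/- arXiv:1402.6631 — 5 statements merged into one kernel-verified Lean document; each statement's English description precedes it below -/
import Mathlib

section
/- Let V be a real vector space, a : V × V → ℝ a symmetric positive semidefinite bilinear form, χ > 0 and τ > 0 real numbers, let K be a positive integer, let ℓ_1, …, ℓ_K : V → ℝ be linear functionals, and let u_0, u_1, …, u_K ∈ V satisfy, for each l = 1, …, K, a(u_l + (χ/τ) • (u_l − u_{l−1}), φ) = ℓ_l(φ) for all φ ∈ V. Then, with E(w) = (1/2) a(w, w), for every k = 1, …, K: E(u_k) + Σ_{l=1}^{k} τ · χ · a((u_l − u_{l−1})/τ, (u_l − u_{l−1})/τ) ≤ E(u_0) + Σ_{l=1}^{k} τ · ℓ_l((u_l − u_{l−1})/τ). -/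
theorem discrete_energy_estimate_kelvin_voigt
    {V : Type*} [AddCommGroup V] [Module ℝ V]
    (a : V →ₗ[ℝ] V →ₗ[ℝ] ℝ)
    (hsym : ∀ x y : V, a x y = a y x)
    (hpsd : ∀ w : V, 0 ≤ a w w)
    (χ τ : ℝ) (hχ : 0 < χ) (hτ : 0 < τ)
    (K : ℕ) (hK : 0 < K)
    (ℓ : ℕ → V →ₗ[ℝ] ℝ) (u : ℕ → V)
    (heq : ∀ l, 1 ≤ l → l ≤ K → ∀ φ : V,
      a (u l + (χ / τ) • (u l - u (l - 1))) φ = ℓ l φ) :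
    ∀ k, 1 ≤ k → k ≤ K →
      (1 / 2) * a (u k) (u k)
        + ∑ l ∈ Finset.Icc 1 k,
            τ * (χ * a ((1 / τ) • (u l - u (l - 1))) ((1 / τ) • (u l - u (l - 1))))
      ≤ (1 / 2) * a (u 0) (u 0)
        + ∑ l ∈ Finset.Icc 1 k, τ * ℓ l ((1 / τ) • (u l - u (l - 1))) := by
  -- per-step estimate
  have step : ∀ l, 1 ≤ l → l ≤ K →
      (1 / 2) * a (u l) (u l)
        + τ * (χ * a ((1 / τ) • (u l - u (l - 1))) ((1 / τ) • (u l - u (l - 1))))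
      ≤ (1 / 2) * a (u (l - 1)) (u (l - 1))
        + τ * ℓ l ((1 / τ) • (u l - u (l - 1))) := by
    intro l hl1 hlK
    set δ := u l - u (l - 1) with hδ
    have hEq := heq l hl1 hlK δ
    have hA : a (u l + (χ / τ) • δ) δ = a (u l) δ + (χ / τ) * a δ δ := by
      simp [map_add, map_smul, smul_eq_mul]
    have hexp : a δ δ = a (u l) (u l) - 2 * a (u l) (u (l - 1))
        + a (u (l - 1)) (u (l - 1)) := by
      simp only [hδ, map_sub, LinearMap.sub_apply]
      rw [hsym (u (l - 1)) (u l)]; ring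
    have hsmul : a ((1 / τ) • δ) ((1 / τ) • δ) = (1 / τ) * ((1 / τ) * a δ δ) := by
      simp [map_smul, smul_eq_mul]
    have hlsmul : ℓ l ((1 / τ) • δ) = (1 / τ) * ℓ l δ := by
      simp [map_smul, smul_eq_mul]
    have hD : 0 ≤ a δ δ := hpsd δ
    have hτ' : τ ≠ 0 := ne_of_gt hτ
    rw [hA] at hEq
    rw [hsmul, hlsmul]
    have hτχ : τ * (χ * ((1 / τ) * ((1 / τ) * a δ δ))) = (χ / τ) * a δ δ := by
      field_simp
    have hτℓ : τ * ((1 / τ) * ℓ l δ) = ℓ l δ := by field_simp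
    rw [hτχ, hτℓ, ← hEq]
    have h2' : a (u l) δ = a (u l) (u l) - a (u l) (u (l - 1)) := by
      simp [hδ, map_sub]
    rw [h2']
    nlinarith [hpsd δ, hexp]
  intro k hk1 hkK
  induction k, hk1 using Nat.le_induction with
  | base =>
    simpa using step 1 le_rfl hkK
  | succ n hn ih =>
    have hnK : n ≤ K := Nat.le_of_succ_le hkK
    have IH := ih hnK
    have hstep := step (n + 1) (by omega) hkK
    rw [Finset.sum_Icc_succ_top (by omega : 1 ≤ n + 1),
        Finset.sum_Icc_succ_top (by omega : 1 ≤ n + 1)]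
    have : n + 1 - 1 = n := by omega
    rw [this] at hstep ⊢
    linarith
end

section
/- Let V be a real vector space, a : V × V → ℝ a symmetric positive semidefinite bilinear form, χ > 0 and τ > 0 real numbers, ℓ : V → ℝ a fixed linear functional, K a positive integer, and u_0, …, u_K ∈ V such that a(u_l + (χ/τ) • (u_l − u_{l−1}), φ) = ℓ(φ) for all φ ∈ V and all l = 1, …, K. Then, with 𝔊(w) = (1/2) a(w, w) − ℓ(w), for every k = 1, …, K: 𝔊(u_k) + Σ_{l=1}^{k} (χ/τ) a(u_l − u_{l−1}, u_l − u_{l−1}) ≤ 𝔊(u_0). In particular the potential energy 𝔊(u_k) is nonincreasing in k. -/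
theorem discrete_potential_energy_decay_constant_load
    {V : Type*} [AddCommGroup V] [Module ℝ V]
    (a : V →ₗ[ℝ] V →ₗ[ℝ] ℝ)
    (hsym : ∀ x y : V, a x y = a y x)
    (hpsd : ∀ w : V, 0 ≤ a w w)
    (χ τ : ℝ) (hχ : 0 < χ) (hτ : 0 < τ)
    (ℓ : V →ₗ[ℝ] ℝ) (K : ℕ) (hK : 0 < K) (u : ℕ → V)
    (heq : ∀ l, 1 ≤ l → l ≤ K → ∀ φ : V,
      a (u l + (χ / τ) • (u l - u (l - 1))) φ = ℓ φ) :
    ∀ k, 1 ≤ k → k ≤ K →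
      (((1 / 2) * a (u k) (u k) - ℓ (u k))
          + ∑ l ∈ Finset.Icc 1 k, (χ / τ) * a (u l - u (l - 1)) (u l - u (l - 1))
        ≤ (1 / 2) * a (u 0) (u 0) - ℓ (u 0))
      ∧ (1 / 2) * a (u k) (u k) - ℓ (u k)
        ≤ (1 / 2) * a (u (k - 1)) (u (k - 1)) - ℓ (u (k - 1)) := by
  have step : ∀ l, 1 ≤ l → l ≤ K →
      (1 / 2) * a (u l) (u l) - ℓ (u l)
        + (χ / τ) * a (u l - u (l - 1)) (u l - u (l - 1))
      ≤ (1 / 2) * a (u (l - 1)) (u (l - 1)) - ℓ (u (l - 1)) := by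
    intro l h1 h2
    have h := heq l h1 h2 (u l - u (l - 1))
    set A := a (u l) (u l) with hA
    set B := a (u l) (u (l - 1)) with hB
    set C := a (u (l - 1)) (u (l - 1)) with hC
    have hsymB : a (u (l - 1)) (u l) = B := hsym _ _
    have hD : a (u l - u (l - 1)) (u l - u (l - 1)) = A - 2 * B + C := by
      simp [map_sub, LinearMap.sub_apply, hsymB, ← hA, ← hB, ← hC]
      ring
    have hD0 : 0 ≤ A - 2 * B + C := hD ▸ hpsd _
    have heq' : (A - B) + (χ / τ) * (A - 2 * B + C) = ℓ (u l) - ℓ (u (l - 1)) := by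
      have := h
      simp [map_add, map_sub, map_smul, LinearMap.add_apply, LinearMap.sub_apply,
        LinearMap.smul_apply, smul_eq_mul, hsymB, ← hA, ← hB, ← hC] at this ⊢
      linarith [this]
    rw [hD]
    linarith
  have main : ∀ k, 1 ≤ k → k ≤ K →
      (1 / 2) * a (u k) (u k) - ℓ (u k)
        + ∑ l ∈ Finset.Icc 1 k, (χ / τ) * a (u l - u (l - 1)) (u l - u (l - 1))
      ≤ (1 / 2) * a (u 0) (u 0) - ℓ (u 0) := by
    intro k hk1 hkK
    induction k with
    | zero => omega
    | succ n ih =>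
      rcases Nat.eq_zero_or_pos n with hn | hn
      · subst hn
        simpa using step 1 le_rfl (by omega)
      · have hsum := ih (by omega) (by omega)
        have hstep := step (n + 1) (by omega) hkK
        rw [show Finset.Icc 1 (n + 1) = Finset.Icc 1 n ∪ {n + 1} by
          ext x; simp [Finset.mem_Icc]; omega,
          Finset.sum_union (by simp [Finset.mem_Icc])]
        simp only [Nat.add_sub_cancel] at hstep
        simp only [Finset.sum_singleton, Nat.add_sub_cancel]
        linarith
  intro k hk1 hkK
  refine ⟨main k hk1 hkK, ?_⟩
  have := step k hk1 hkK
  have h0 : 0 ≤ (χ / τ) * a (u k - u (k - 1)) (u k - u (k - 1)) :=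
    mul_nonneg (le_of_lt (div_pos hχ hτ)) (hpsd _)
  linarith
end

section
/- Let V be a real inner product space, a : V × V → ℝ a symmetric bilinear form with a(w, w) ≥ α ‖w‖² for all w ∈ V and some α > 0, χ > 0 and τ > 0 real numbers, K a positive integer, M ≥ 0, and ℓ_1, …, ℓ_K : V → ℝ linear functionals with |ℓ_l(φ)| ≤ M ‖φ‖ for all φ ∈ V and all l. Let u_0, …, u_K ∈ V satisfy a(u_l + (χ/τ) • (u_l − u_{l−1}), φ) = ℓ_l(φ) for all φ ∈ V and all l = 1, …, K. Then for every k = 1, …, K: (1/2) a(u_k, u_k) ≤ (1/2) a(u_0, u_0) + k τ M² / (4 χ α); in particular ‖u_k‖² ≤ (1/α) a(u_0, u_0) + k τ M² / (2 χ α²). -/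
theorem discrete_stability_estimate_kelvin_voigt
    {V : Type*} [NormedAddCommGroup V] [InnerProductSpace ℝ V]
    (a : V →ₗ[ℝ] V →ₗ[ℝ] ℝ)
    (hsym : ∀ x y : V, a x y = a y x)
    (α : ℝ) (hα : 0 < α)
    (hcoer : ∀ w : V, α * ‖w‖ ^ 2 ≤ a w w)
    (χ τ : ℝ) (hχ : 0 < χ) (hτ : 0 < τ)
    (K : ℕ) (hK : 0 < K) (M : ℝ) (hM : 0 ≤ M)
    (ℓ : ℕ → V →ₗ[ℝ] ℝ)
    (hℓ : ∀ l, 1 ≤ l → l ≤ K → ∀ φ : V, |ℓ l φ| ≤ M * ‖φ‖)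
    (u : ℕ → V)
    (heq : ∀ l, 1 ≤ l → l ≤ K → ∀ φ : V,
      a (u l + (χ / τ) • (u l - u (l - 1))) φ = ℓ l φ) :
    ∀ k, 1 ≤ k → k ≤ K →
      (1 / 2) * a (u k) (u k)
        ≤ (1 / 2) * a (u 0) (u 0) + (k : ℝ) * τ * M ^ 2 / (4 * χ * α)
      ∧ ‖u k‖ ^ 2
        ≤ (1 / α) * a (u 0) (u 0) + (k : ℝ) * τ * M ^ 2 / (2 * χ * α ^ 2) := by
  -- one-step energy estimate
  have step : ∀ l, 1 ≤ l → l ≤ K →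
      (1 / 2) * a (u l) (u l)
        ≤ (1 / 2) * a (u (l - 1)) (u (l - 1)) + τ * M ^ 2 / (4 * χ * α) := by
    intro l h1 h2
    set δ : V := u l - u (l - 1) with hδ
    have he := heq l h1 h2 δ
    have hexp : a (u l) δ + (χ / τ) * a δ δ = ℓ l δ := by
      have h' : a (u l + (χ / τ) • δ) δ = ℓ l δ := he
      rw [map_add, map_smul, LinearMap.add_apply, LinearMap.smul_apply,
        smul_eq_mul] at h'
      exact h'
    have hsymlem := hsym (u l) (u (l - 1))
    have hid : a (u l) δ
        = (1 / 2) * (a (u l) (u l) - a (u (l - 1)) (u (l - 1)) + a δ δ) := by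
      simp only [hδ, map_sub, LinearMap.sub_apply]
      linarith
    have hlb := hℓ l h1 h2 δ
    have hle : ℓ l δ ≤ M * ‖δ‖ := le_trans (le_abs_self _) hlb
    have hcd := hcoer δ
    have hnn : (0:ℝ) ≤ ‖δ‖ := norm_nonneg _
    have hA : (0:ℝ) < χ * α / τ := by positivity
    have hyoung : M * ‖δ‖ ≤ (χ * α / τ) * ‖δ‖ ^ 2 + τ * M ^ 2 / (4 * χ * α) := by
      have hkey : (χ * α / τ) * ‖δ‖ ^ 2 + τ * M ^ 2 / (4 * χ * α) - M * ‖δ‖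
          = (2 * χ * α * ‖δ‖ - τ * M) ^ 2 / (4 * χ * α * τ) := by
        field_simp; ring
      have h0 : (0:ℝ) ≤ (2 * χ * α * ‖δ‖ - τ * M) ^ 2 / (4 * χ * α * τ) := by positivity
      linarith
    have hmul : (χ / τ) * (α * ‖δ‖ ^ 2) ≤ (χ / τ) * a δ δ :=
      mul_le_mul_of_nonneg_left hcd (le_of_lt (by positivity))
    have hrw : (χ / τ) * (α * ‖δ‖ ^ 2) = (χ * α / τ) * ‖δ‖ ^ 2 := by ring
    have hann : (0:ℝ) ≤ a δ δ := le_trans (by positivity) hcd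
    nlinarith [hexp, hid, hle, hyoung, hmul, hrw]
  -- main energy bound by induction
  have main : ∀ k, k ≤ K →
      (1 / 2) * a (u k) (u k)
        ≤ (1 / 2) * a (u 0) (u 0) + (k : ℝ) * τ * M ^ 2 / (4 * χ * α) := by
    intro k
    induction k with
    | zero => intro _; simp
    | succ n ih =>
      intro hk
      have hn : n ≤ K := Nat.le_of_succ_le hk
      have hs := step (n + 1) (Nat.succ_le_succ (Nat.zero_le n)) hk
      simp only [Nat.add_sub_cancel] at hs
      have hi := ih hn
      have hcast : ((n + 1 : ℕ) : ℝ) * τ * M ^ 2 / (4 * χ * α)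
          = (n : ℝ) * τ * M ^ 2 / (4 * χ * α) + τ * M ^ 2 / (4 * χ * α) := by
        push_cast; ring
      rw [hcast]
      linarith
  intro k hk1 hk2
  have h1 := main k hk2
  refine ⟨h1, ?_⟩
  have hc := hcoer (u k)
  have h2 : a (u k) (u k) ≤ a (u 0) (u 0) + (k : ℝ) * τ * M ^ 2 / (2 * χ * α) := by
    have : (k : ℝ) * τ * M ^ 2 / (2 * χ * α) = 2 * ((k : ℝ) * τ * M ^ 2 / (4 * χ * α)) := by
      field_simp; ring
    rw [this]; linarith
  have h3 : α * ‖u k‖ ^ 2 ≤ a (u 0) (u 0) + (k : ℝ) * τ * M ^ 2 / (2 * χ * α) :=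
    le_trans hc h2
  have h4 : ((1:ℝ) / α) * a (u 0) (u 0) + (k : ℝ) * τ * M ^ 2 / (2 * χ * α ^ 2)
      = (a (u 0) (u 0) + (k : ℝ) * τ * M ^ 2 / (2 * χ * α)) / α := by
    field_simp
  rw [h4, le_div_iff₀ hα]
  linarith
end

section
/- Let V be a real normed vector space, a : V × V → ℝ a continuous symmetric bilinear form, χ > 0 a real number, and T > 0. Let u : [0, T] → V be continuously differentiable and let ℓ : [0, T] × V → ℝ be such that ℓ(s, ·) is linear for each s, the function s ↦ ℓ(s, u'(s)) is continuous on [0, T], and suppose a(u(t), φ) + χ a(u'(t), φ) = ℓ(t, φ) for all φ ∈ V and all t ∈ [0, T]. Then for every t ∈ [0, T]: (1/2) a(u(t), u(t)) + ∫_0^t χ a(u'(s), u'(s)) ds = (1/2) a(u(0), u(0)) + ∫_0^t ℓ(s, u'(s)) ds. -/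
open intervalIntegral

/-! Testing the equilibrium with `φ = u'(s)` gives `ℓ(s, u'(s)) = a(u, u') + χ a(u', u')`, and by
symmetry of `a` the term `a(u, u')` is the derivative of the stored energy `(1/2) a(u, u)`;
integrating over `[0, t]` gives the balance. -/

theorem HasDerivWithinAt.half_clm_apply_self {V : Type*} [NormedAddCommGroup V] [NormedSpace ℝ V]
    {a : V →L[ℝ] V →L[ℝ] ℝ} (hsym : ∀ x y : V, a x y = a y x)
    {u : ℝ → V} {v : V} {S : Set ℝ} {t : ℝ} (hu : HasDerivWithinAt u v S t) :
    HasDerivWithinAt (fun s => (1 / 2) * a (u s) (u s)) (a (u t) v) S t := by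
  have h := ((a.hasFDerivAt.comp_hasDerivWithinAt t hu).clm_apply hu).const_mul (1 / 2)
  refine h.congr_deriv ?_
  simp only [Function.comp_apply, hsym v (u t)]
  ring

theorem integral_clm_apply_deriv_self {V : Type*} [NormedAddCommGroup V] [NormedSpace ℝ V]
    {a : V →L[ℝ] V →L[ℝ] ℝ} (hsym : ∀ x y : V, a x y = a y x)
    {u u' : ℝ → V} {t₀ t₁ : ℝ} (ht : t₀ ≤ t₁)
    (hderiv : ∀ t ∈ Set.Icc t₀ t₁, HasDerivWithinAt u (u' t) (Set.Icc t₀ t₁) t)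
    (hu' : ContinuousOn u' (Set.Icc t₀ t₁)) :
    ∫ s in t₀..t₁, a (u s) (u' s) = (1 / 2) * a (u t₁) (u t₁) - (1 / 2) * a (u t₀) (u t₀) := by
  have hu : ContinuousOn u (Set.Icc t₀ t₁) := fun s hs => (hderiv s hs).continuousWithinAt
  have hint : ContinuousOn (fun s => a (u s) (u' s)) (Set.Icc t₀ t₁) :=
    (a.continuous.comp_continuousOn hu).clm_apply hu'
  refine integral_eq_sub_of_hasDeriv_right_of_le ht
    (fun s hs => ((hderiv s hs).half_clm_apply_self hsym).continuousWithinAt) (fun s hs => ?_)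
    (hint.intervalIntegrable_of_Icc ht)
  exact (((hderiv s (Set.Ioo_subset_Icc_self hs)).half_clm_apply_self hsym).hasDerivAt
    (Icc_mem_nhds hs.1 hs.2)).hasDerivWithinAt

theorem continuous_energy_balance_kelvin_voigt_general
    {V : Type*} [NormedAddCommGroup V] [NormedSpace ℝ V]
    (a : V →L[ℝ] V →L[ℝ] ℝ)
    (hsym : ∀ x y : V, a x y = a y x)
    (χ : ℝ)
    (T : ℝ)
    (u u' : ℝ → V)
    (hderiv : ∀ t ∈ Set.Icc (0 : ℝ) T, HasDerivWithinAt u (u' t) (Set.Icc 0 T) t)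
    (hu'cont : ContinuousOn u' (Set.Icc 0 T))
    (ℓ : ℝ → V →ₗ[ℝ] ℝ)
    (heq : ∀ t ∈ Set.Icc (0 : ℝ) T, ∀ φ : V, a (u t) φ + χ * a (u' t) φ = ℓ t φ) :
    ∀ t ∈ Set.Icc (0 : ℝ) T,
      (1 / 2) * a (u t) (u t) + ∫ s in (0 : ℝ)..t, χ * a (u' s) (u' s)
        = (1 / 2) * a (u 0) (u 0) + ∫ s in (0 : ℝ)..t, ℓ s (u' s) := by
  rintro t ⟨ht0, htT⟩
  have hsub : Set.Icc 0 t ⊆ Set.Icc 0 T := Set.Icc_subset_Icc le_rfl htT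
  have hderiv' : ∀ s ∈ Set.Icc 0 t, HasDerivWithinAt u (u' s) (Set.Icc 0 t) s :=
    fun s hs => (hderiv s (hsub hs)).mono hsub
  have hu : ContinuousOn u (Set.Icc 0 t) := fun s hs => (hderiv' s hs).continuousWithinAt
  have hu' : ContinuousOn u' (Set.Icc 0 t) := hu'cont.mono hsub
  have hwork : ∫ s in (0 : ℝ)..t, ℓ s (u' s)
      = (∫ s in (0 : ℝ)..t, a (u s) (u' s)) + ∫ s in (0 : ℝ)..t, χ * a (u' s) (u' s) := by
    have helastic : ContinuousOn (fun s => a (u s) (u' s)) (Set.Icc 0 t) :=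
      (a.continuous.comp_continuousOn hu).clm_apply hu'
    have hviscous : ContinuousOn (fun s => χ * a (u' s) (u' s)) (Set.Icc 0 t) :=
      ((a.continuous.comp_continuousOn hu').clm_apply hu').const_smul χ
    rw [← integral_add (helastic.intervalIntegrable_of_Icc ht0)
      (hviscous.intervalIntegrable_of_Icc ht0)]
    refine integral_congr fun s hs => (heq s (hsub ?_) (u' s)).symm
    rwa [Set.uIcc_of_le ht0] at hs
  rw [hwork, integral_clm_apply_deriv_self hsym ht0 hderiv' hu']
  ring

theorem continuous_energy_balance_kelvin_voigt
    {V : Type*} [NormedAddCommGroup V] [NormedSpace ℝ V]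
    (a : V →L[ℝ] V →L[ℝ] ℝ)
    (hsym : ∀ x y : V, a x y = a y x)
    (χ : ℝ) (hχ : 0 < χ)
    (T : ℝ) (hT : 0 < T)
    (u u' : ℝ → V)
    (hderiv : ∀ t ∈ Set.Icc (0 : ℝ) T, HasDerivWithinAt u (u' t) (Set.Icc 0 T) t)
    (hu'cont : ContinuousOn u' (Set.Icc 0 T))
    (ℓ : ℝ → V →ₗ[ℝ] ℝ)
    (hℓcont : ContinuousOn (fun s => ℓ s (u' s)) (Set.Icc 0 T))
    (heq : ∀ t ∈ Set.Icc (0 : ℝ) T, ∀ φ : V, a (u t) φ + χ * a (u' t) φ = ℓ t φ) :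
    ∀ t ∈ Set.Icc (0 : ℝ) T,
      (1 / 2) * a (u t) (u t) + ∫ s in (0 : ℝ)..t, χ * a (u' s) (u' s)
        = (1 / 2) * a (u 0) (u 0) + ∫ s in (0 : ℝ)..t, ℓ s (u' s) :=
  continuous_energy_balance_kelvin_voigt_general a hsym χ T u u' hderiv hu'cont ℓ heq
end

section
/- Let V be a real normed vector space and H a real inner product space, e : V → H a continuous linear map, and C_M, C_KV, D : H → H continuous linear operators, each self-adjoint in the sense ⟨A x, y⟩ = ⟨x, A y⟩. Let T > 0, let u : [0, T] → V and π : [0, T] → H be continuously differentiable, and let ℓ : [0, T] × V → ℝ be such that ℓ(s, ·) is linear for each s and s ↦ ℓ(s, u'(s)) is continuous. Suppose that for all t ∈ [0, T]: (i) equilibrium: ⟨C_M(e(u(t)) − π(t)), e(φ)⟩ = ℓ(t, φ) for all φ ∈ V, and (ii) flow rule: D π'(t) = C_M(e(u(t)) − π(t)) − C_KV π(t). Then, with the stored energy 𝓔(t) = (1/2)⟨C_M(e(u(t)) − π(t)), e(u(t)) − π(t)⟩ + (1/2)⟨C_KV π(t), π(t)⟩, for every t ∈ [0, T]: 𝓔(t)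 + ∫_0^t ⟨D π'(s), π'(s)⟩ ds = 𝓔(0) + ∫_0^t ℓ(s, u'(s)) ds. -/
open RealInnerProductSpace

theorem energy_balance_standard_linear_solid
    {V : Type*} [NormedAddCommGroup V] [NormedSpace ℝ V]
    {H : Type*} [NormedAddCommGroup H] [InnerProductSpace ℝ H]
    (e : V →L[ℝ] H)
    (CM CKV D : H →L[ℝ] H)
    (hCM : ∀ x y : H, ⟪CM x, y⟫ = ⟪x, CM y⟫)
    (hCKV : ∀ x y : H, ⟪CKV x, y⟫ = ⟪x, CKV y⟫)
    (hD : ∀ x y : H, ⟪D x, y⟫ = ⟪x, D y⟫)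
    (T : ℝ) (hT : 0 < T)
    (u u' : ℝ → V) (π π' : ℝ → H)
    (hu : ∀ t ∈ Set.Icc (0 : ℝ) T, HasDerivWithinAt u (u' t) (Set.Icc 0 T) t)
    (hu'cont : ContinuousOn u' (Set.Icc 0 T))
    (hπ : ∀ t ∈ Set.Icc (0 : ℝ) T, HasDerivWithinAt π (π' t) (Set.Icc 0 T) t)
    (hπ'cont : ContinuousOn π' (Set.Icc 0 T))
    (ℓ : ℝ → V →ₗ[ℝ] ℝ)
    (hℓcont : ContinuousOn (fun s => ℓ s (u' s)) (Set.Icc 0 T))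
    (hequil : ∀ t ∈ Set.Icc (0 : ℝ) T, ∀ φ : V,
      ⟪CM (e (u t) - π t), e φ⟫ = ℓ t φ)
    (hflow : ∀ t ∈ Set.Icc (0 : ℝ) T,
      D (π' t) = CM (e (u t) - π t) - CKV (π t)) :
    ∀ t ∈ Set.Icc (0 : ℝ) T,
      ((1 / 2) * ⟪CM (e (u t) - π t), e (u t) - π t⟫
          + (1 / 2) * ⟪CKV (π t), π t⟫)
        + ∫ s in (0 : ℝ)..t, ⟪D (π' s), π' s⟫
      = ((1 / 2) * ⟪CM (e (u 0) - π 0), e (u 0) - π 0⟫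
          + (1 / 2) * ⟪CKV (π 0), π 0⟫)
        + ∫ s in (0 : ℝ)..t, ℓ s (u' s) := by
  intro t ht
  obtain ⟨ht0, htT⟩ := ht
  set E : ℝ → ℝ := fun s => (1 / 2) * ⟪CM (e (u s) - π s), e (u s) - π s⟫
      + (1 / 2) * ⟪CKV (π s), π s⟫ with hEdef
  set g : ℝ → ℝ := fun s => ℓ s (u' s) - ⟪D (π' s), π' s⟫ with hgdef
  have hEderiv : ∀ s ∈ Set.Icc (0 : ℝ) T, HasDerivWithinAt E (g s) (Set.Icc 0 T) s := by
    intro s hs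
    have hε : HasDerivWithinAt (fun r => e (u r) - π r) (e (u' s) - π' s) (Set.Icc 0 T) s :=
      (e.hasFDerivAt.comp_hasDerivWithinAt s (hu s hs)).sub (hπ s hs)
    have h1 : HasDerivWithinAt (fun r => CM (e (u r) - π r)) (CM (e (u' s) - π' s))
        (Set.Icc 0 T) s := CM.hasFDerivAt.comp_hasDerivWithinAt s hε
    have h2 : HasDerivWithinAt (fun r => CKV (π r)) (CKV (π' s)) (Set.Icc 0 T) s :=
      CKV.hasFDerivAt.comp_hasDerivWithinAt s (hπ s hs)
    have hi1 := h1.inner ℝ hε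
    have hi2 := h2.inner ℝ (hπ s hs)
    have := ((hi1.const_mul ((1:ℝ)/2)).add (hi2.const_mul ((1:ℝ)/2)))
    refine this.congr_deriv ?_
    have hsym1 : ⟪CM (e (u' s) - π' s), e (u s) - π s⟫
        = ⟪CM (e (u s) - π s), e (u' s) - π' s⟫ := by
      rw [hCM, real_inner_comm]
    have hsym2 : ⟪CKV (π' s), π s⟫ = ⟪CKV (π s), π' s⟫ := by
      rw [hCKV, real_inner_comm]
    have hgs : g s = ⟪CM (e (u s) - π s), e (u' s) - π' s⟫ + ⟪CKV (π s), π' s⟫ := by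
      have heq := hequil s hs (u' s)
      have hfl := hflow s hs
      have hDs : ⟪D (π' s), π' s⟫ = ⟪CM (e (u s) - π s), π' s⟫ - ⟪CKV (π s), π' s⟫ := by
        rw [hfl, inner_sub_left]
      simp only [hgdef, hDs, ← heq, inner_sub_right]
      ring
    rw [hgs, hsym1, hsym2]
    ring
  have hgcont : ContinuousOn g (Set.Icc 0 T) := by
    apply hℓcont.sub
    exact (D.continuous.comp_continuousOn hπ'cont).inner hπ'cont
  have hsub : Set.Icc (0 : ℝ) t ⊆ Set.Icc 0 T := Set.Icc_subset_Icc le_rfl htT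
  have huIcc : Set.uIcc (0 : ℝ) t = Set.Icc 0 t := Set.uIcc_of_le ht0
  have hgint : IntervalIntegrable g MeasureTheory.volume 0 t :=
    (hgcont.mono (huIcc ▸ hsub : Set.uIcc (0:ℝ) t ⊆ Set.Icc 0 T)).intervalIntegrable
  have hftc : ∫ s in (0 : ℝ)..t, g s = E t - E 0 := by
    apply intervalIntegral.integral_eq_sub_of_hasDeriv_right_of_le ht0
    · exact fun x hx => ((hEderiv x (hsub hx)).continuousWithinAt).mono hsub
    · intro x hx
      have hxT : x ∈ Set.Ioo (0 : ℝ) T := ⟨hx.1, lt_of_lt_of_le hx.2 htT⟩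
      have : HasDerivAt E (g x) x :=
        (hEderiv x (Set.Ioo_subset_Icc_self hxT)).hasDerivAt
          (Icc_mem_nhds hxT.1 hxT.2)
      exact this.hasDerivWithinAt
    · exact hgint
  have hℓint : IntervalIntegrable (fun s => ℓ s (u' s)) MeasureTheory.volume 0 t :=
    (hℓcont.mono (huIcc ▸ hsub : Set.uIcc (0:ℝ) t ⊆ Set.Icc 0 T)).intervalIntegrable
  have hDint : IntervalIntegrable (fun s => ⟪D (π' s), π' s⟫) MeasureTheory.volume 0 t :=
    (((D.continuous.comp_continuousOn hπ'cont).inner hπ'cont).mono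
      (huIcc ▸ hsub : Set.uIcc (0:ℝ) t ⊆ Set.Icc 0 T)).intervalIntegrable
  have hsplit : ∫ s in (0 : ℝ)..t, g s
      = (∫ s in (0 : ℝ)..t, ℓ s (u' s)) - ∫ s in (0 : ℝ)..t, ⟪D (π' s), π' s⟫ :=
    intervalIntegral.integral_sub hℓint hDint
  have hE0 : E 0 = (1 / 2) * ⟪CM (e (u 0) - π 0), e (u 0) - π 0⟫
      + (1 / 2) * ⟪CKV (π 0), π 0⟫ := rfl
  have hEt : E t = (1 / 2) * ⟪CM (e (u t) - π t), e (u t) - π t⟫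
      + (1 / 2) * ⟪CKV (π t), π t⟫ := rfl
  rw [← hEt, ← hE0]
  rw [hsplit] at hftc
  linarith
end
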